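/- In the Markov-modulated setting with |S|>1, suppose condition (E) holds, i.e. for every i∈S there exists c_i∈R with P_i(A_1^i c_i+B_1^i=c_i)=1, and suppose P_i(A_1^i=1)<1 for some (equivalently, all) i∈S. Then the family (c_i)_{i∈S} in (E) is unique, the degeneracy condition (D) holds, i.e. P_π(A_1c_{M_1}+B_1=c_{M_0})=1, and more generally, for every n∈N, Π_n c_{M_n}+∑_{k=1}^n Π_{k-1}B_k=c_{M_0} a.s. -/

import Mathlib

open MeasureTheory ProbabilityTheory Filter
open scoped ENNReal NNReal Topology

noncomputable section

namespace Perpetuities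

/-- The positive part of the logarithm, with the convention `log⁺ 0 = 0`. -/
def logplus (x : ℝ) : ℝ := max (Real.log x) 0

/-- Weak convergence of a sequence of (probability) measures on `ℝ`. -/
def WeakLim (μ : ℕ → Measure ℝ) (ν : Measure ℝ) : Prop :=
  ∀ f : BoundedContinuousFunction ℝ ℝ,
    Tendsto (fun n => ∫ x, f x ∂ μ n) atTop (nhds (∫ x, f x ∂ ν))

/-- `|f n| → ∞` in `μ`-probability. -/
def TendstoInfInMeasure {Ω : Type*} [MeasurableSpace Ω] (μ : Measure Ω) (f : ℕ → Ω → ℝ) : Prop :=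
  ∀ x : ℝ, 0 < x → Tendsto (fun n => μ {ω | |f n ω| ≤ x}) atTop (nhds 0)

/-- `d` is the lattice span (period) of the distribution of the `ℕ`-valued random
variable `T` under `μ`, i.e. `d` is the greatest common divisor of the support. -/
def LatticeSpan {Ω : Type*} [MeasurableSpace Ω] (μ : Measure Ω) (T : Ω → ℕ) (d : ℕ) : Prop :=
  (∀ n, 0 < μ {ω | T ω = n} → d ∣ n) ∧ ∀ e : ℕ, (∀ n, 0 < μ {ω | T ω = n} → e ∣ n) → e ∣ d

/-- The Markov-modulated setting: an ergodic (irreducible, aperiodic, positive recurrent)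
Markov chain `M` on a countable state space `S` with transition matrix `p` and stationary
distribution `π`, modulating a sequence `(A_n, B_n)_{n ≥ 1}` of real random pairs (indexed
here so that `A n`, `B n` are the paper's `A_{n+1}`, `B_{n+1}`): conditionally on the whole
path of the chain, the pairs are independent and the conditional law of `(A_{n+1}, B_{n+1})`
given the path depends only on `(M_n, M_{n+1})`, via the stochastic kernel `K`.
`P i` is the underlying probability measure conditioned on `M 0 = i`. -/
structure MMSetting (S : Type*) (Ω : Type*) [MeasurableSpace S] [MeasurableSingletonClass S]
    [Countable S] [MeasurableSpace Ω] where
  P : S → Measure Ω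
  prob : ∀ i, IsProbabilityMeasure (P i)
  π : S → ℝ≥0∞
  πsum : ∑' i, π i = 1
  πpos : ∀ i, 0 < π i
  p : S → S → ℝ≥0∞
  psum : ∀ i, ∑' j, p i j = 1
  stationary : ∀ j, ∑' i, π i * p i j = π j
  K : S → S → Measure (ℝ × ℝ)
  Kprob : ∀ i j, IsProbabilityMeasure (K i j)
  M : ℕ → Ω → S
  A : ℕ → Ω → ℝ
  B : ℕ → Ω → ℝ
  measM : ∀ n, Measurable (M n)
  measA : ∀ n, Measurable (A n)
  measB : ∀ n, Measurable (B n)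
  start : ∀ i, P i {ω | M 0 ω = i} = 1
  chain : ∀ (i : S) (n : ℕ) (path : ℕ → S), path 0 = i →
    P i (⋂ k ∈ Finset.range (n + 1), {ω | M k ω = path k})
      = ∏ k ∈ Finset.range n, p (path k) (path (k + 1))
  modulated : ∀ (i : S) (n : ℕ) (path : ℕ → S) (E : ℕ → Set (ℝ × ℝ)), path 0 = i →
    (∀ k, MeasurableSet (E k)) →
    P i ((⋂ k ∈ Finset.range (n + 1), {ω | M k ω = path k}) ∩
        ⋂ k ∈ Finset.range n, {ω | (A k ω, B k ω) ∈ E k})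
      = P i (⋂ k ∈ Finset.range (n + 1), {ω | M k ω = path k})
        * ∏ k ∈ Finset.range n, K (path k) (path (k + 1)) (E k)
  irreducible : ∀ i j, ∃ n, 0 < P i {ω | M n ω = j}
  recurrent : ∀ i, P i {ω | ∃ n, 0 < n ∧ M n ω = i} = 1
  posRecurrent : ∀ i, ∫⁻ ω, ((sInf {n | 0 < n ∧ M n ω = i} : ℕ) : ℝ≥0∞) ∂ P i < ⊤
  aperiodic : ∀ (i : S) (d : ℕ), (∀ n, 0 < n → 0 < P i {ω | M n ω = i} → d ∣ n) → d = 1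

namespace MMSetting

variable {S : Type*} [MeasurableSpace S] [MeasurableSingletonClass S] [Countable S]
variable {Ω : Type*} [MeasurableSpace Ω]
variable (X : MMSetting S Ω)

/-- `Pπ = ∑ i, π i • P i`, the stationary (unconditional) probability measure. -/
def Pπ : Measure Ω := Measure.sum fun i => X.π i • X.P i

/-- `Pprod n = Π_n = A_1 ⋯ A_n`, with `Π_0 = 1`. -/
def Pprod (n : ℕ) (ω : Ω) : ℝ := ∏ k ∈ Finset.range n, X.A k ω

/-- `Ssum n = ∑_{k=1}^n Π_{k-1} B_k`, the value `Ψ_1 ∘ ⋯ ∘ Ψ_n (0)` of the backward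
iteration started at `0`. -/
def Ssum (n : ℕ) (ω : Ω) : ℝ := ∑ k ∈ Finset.range n, X.Pprod k ω * X.B k ω

/-- `Zb Z n = Ψ_1 ∘ ⋯ ∘ Ψ_n (Z) = Π_n Z + ∑_{k=1}^n Π_{k-1} B_k`, the backward iteration. -/
def Zb (Z : Ω → ℝ) (n : ℕ) (ω : Ω) : ℝ := X.Pprod n ω * Z ω + X.Ssum n ω

/-- `Zf Z n = Ψ_n ∘ ⋯ ∘ Ψ_1 (Z)`, the forward iteration. -/
def Zf (Z : Ω → ℝ) : ℕ → Ω → ℝ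
  | 0 => Z
  | n + 1 => fun ω => X.A n ω * Zf Z n ω + X.B n ω

/-- The perpetuity `Z_∞ = ∑_{n ≥ 1} Π_{n-1} B_n`. -/
def Zinf (ω : Ω) : ℝ := ∑' n, X.Pprod n ω * X.B n ω

/-- `tau i n = τ_n(i)`, the `n`-th return time of the driving chain to the state `i`
(`τ_0(i) = 0`). -/
def tau (i : S) : ℕ → Ω → ℕ
  | 0 => fun _ => 0
  | n + 1 => fun ω => sInf {k | tau i n ω < k ∧ X.M k ω = i}

/-- `A_1^i = Π_{τ(i)}`. -/
def Ai (i : S) (ω : Ω) : ℝ := X.Pprod (X.tau i 1 ω) ω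

/-- `B_1^i = ∑_{k=1}^{τ(i)} Π_{k-1} B_k`. -/
def Bi (i : S) (ω : Ω) : ℝ := X.Ssum (X.tau i 1 ω) ω

/-- `W^i = max_{1 ≤ k ≤ τ(i)} |Π_{k-1} B_k|`. -/
def Wi (i : S) (ω : Ω) : ℝ :=
  (((Finset.range (X.tau i 1 ω)).sup fun k => ‖X.Pprod k ω * X.B k ω‖₊ : ℝ≥0) : ℝ)

/-- `S_{τ(i)} = - log |Π_{τ(i)}|`. -/
def Stau (i : S) (ω : Ω) : ℝ := - Real.log |X.Ai i ω|

/-- The function `J_i`: `J_i(0) = 1`, and for `x > 0`, `J_i(x) = x / E_i (S_{τ(i)}⁺ ∧ x)`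
if `P_i(S_{τ(i)} ≤ 0) < 1`, and `J_i(x) = x` otherwise. -/
def Ji (i : S) (x : ℝ) : ℝ :=
  if x = 0 then 1
  else if X.P i {ω | X.Stau i ω ≤ 0} < 1 then
    x / ∫ ω, min (max (X.Stau i ω) 0) x ∂ X.P i
  else x

/-- `τ̂(i) = inf {k ≥ 1 : M_k = i, Π_k = 1}`. -/
def hatτ (i : S) (ω : Ω) : ℕ := sInf {k | 0 < k ∧ X.M k ω = i ∧ X.Pprod k ω = 1}

/-- `Z` is an admissible initial value: it is (conditionally on `M 0`, i.e. under each `P i`)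
independent of the modulated sequence `(M_n, A_n, B_n)_{n ≥ 1}`. -/
def Admissible (Z : Ω → ℝ) : Prop :=
  Measurable Z ∧
    ∀ i : S, IndepFun Z (fun ω => fun n : ℕ => (X.M (n + 1) ω, X.A n ω, X.B n ω)) (X.P i)

/-- The degeneracy condition: `A_1 c_{M_1} + B_1 = c_{M_0}` a.s. for the family `c`. -/
def DegenD (c : S → ℝ) : Prop :=
  ∀ᵐ ω ∂ X.Pπ, X.A 0 ω * c (X.M 1 ω) + X.B 0 ω = c (X.M 0 ω)

/-- The dual degeneracy condition: `A_1 c_{M_0} + B_1 = c_{M_1}` a.s. for the family `c`. -/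
def DegenDdual (c : S → ℝ) : Prop :=
  ∀ᵐ ω ∂ X.Pπ, X.A 0 ω * c (X.M 0 ω) + X.B 0 ω = c (X.M 1 ω)

end MMSetting

end Perpetuities

/-!
Conditionally on a cylinder `{M_0 = γ_0, …, M_n = γ_n}` of positive probability, the pairs
`(A_k, B_k)_{k<n}` are independent with laws `K (γ_k) (γ_{k+1})`. So a statement about one path
of the chain is a statement about a product measure, and paths are concatenated by Fubini. Write
`Ψ_v` for the composition of the affine maps `x ↦ a x + b` along `v`. Condition (E) says that
`c_i` is a.s. fixed by `Ψ` along every first-return excursion from `i`, hence along every cycle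
at `i`. The hypothesis `P_i(A_1^i = 1) < 1` gives a cycle at every state whose slope is not a.s.
`1`. Such a cycle has at most one a.s. fixed point, which gives uniqueness of `c`. For a path `γ`
from `a` to `b`, comparing the cycles `γ β` and `γ δ β` at `a` gives `Ψ_γ (c_b) = c_a` a.s.
Here `β` returns to `a` and `δ` is a nondegenerate cycle at `b`. On one-step paths this is (D)
for the kernels `K`, and iterating it along the chain gives the `n`-step identity.
-/

namespace Perpetuities

open Set

section AffineComp

/-- `affineComp v` is `ψ₀ ∘ ⋯ ∘ ψₙ₋₁` where `ψₖ x = (v k).1 * x + (v k).2`. -/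
def affineComp {n : ℕ} (v : Fin n → ℝ × ℝ) (x : ℝ) : ℝ :=
  Fin.foldr n (fun k y => (v k).1 * y + (v k).2) x

def affineSlope {n : ℕ} (v : Fin n → ℝ × ℝ) : ℝ := ∏ k, (v k).1

@[simp] lemma affineComp_zero (v : Fin 0 → ℝ × ℝ) (x : ℝ) : affineComp v x = x :=
  Fin.foldr_zero _ _

lemma affineComp_succ {n : ℕ} (v : Fin (n + 1) → ℝ × ℝ) (x : ℝ) :
    affineComp v x = (v 0).1 * affineComp (Fin.tail v) x + (v 0).2 :=
  Fin.foldr_succ _ _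

lemma affineComp_one (v : Fin 1 → ℝ × ℝ) (x : ℝ) : affineComp v x = (v 0).1 * x + (v 0).2 := by
  simp [affineComp_succ]

lemma affineComp_succ_last {n : ℕ} (v : Fin (n + 1) → ℝ × ℝ) (x : ℝ) :
    affineComp v x = affineComp (Fin.init v) ((v (Fin.last n)).1 * x + (v (Fin.last n)).2) :=
  Fin.foldr_succ_last _ _

lemma affineComp_append {m r : ℕ} (v : Fin m → ℝ × ℝ) (w : Fin r → ℝ × ℝ) (x : ℝ) :
    affineComp (Fin.append v w) x = affineComp v (affineComp w x) := by
  simp [affineComp, Fin.foldr_add]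

lemma affineComp_eq {n : ℕ} (v : Fin n → ℝ × ℝ) (x : ℝ) :
    affineComp v x = affineSlope v * x + affineComp v 0 := by
  induction n with
  | zero => simp [affineSlope]
  | succ n ih =>
    rw [affineComp_succ, affineComp_succ, ih]
    simp only [affineSlope, Fin.prod_univ_succ, Fin.tail]
    ring

lemma affineComp_sub {n : ℕ} (v : Fin n → ℝ × ℝ) (x y : ℝ) :
    affineComp v x - affineComp v y = affineSlope v * (x - y) := by
  rw [affineComp_eq v x, affineComp_eq v y]
  ring

lemma affineSlope_append {m r : ℕ} (v : Fin m → ℝ × ℝ) (w : Fin r → ℝ × ℝ) :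
    affineSlope (Fin.append v w) = affineSlope v * affineSlope w := by
  simp [affineSlope, Fin.prod_univ_add]

lemma measurable_affineSlope {n : ℕ} : Measurable (affineSlope (n := n)) :=
  Finset.measurable_prod _ fun k _ => (measurable_pi_apply k).fst

lemma measurable_affineComp {n : ℕ} (x : ℝ) :
    Measurable fun v : Fin n → ℝ × ℝ => affineComp v x := by
  induction n with
  | zero => simp
  | succ n ih =>
    simp only [affineComp_succ]
    exact ((measurable_pi_apply 0).fst.mul
      (ih.comp (measurable_pi_lambda _ fun k => measurable_pi_apply _))).add
      (measurable_pi_apply 0).snd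

lemma eq_of_ae_affineComp_eq {n : ℕ} {μ : Measure (Fin n → ℝ × ℝ)}
    (hμ : ¬ ∀ᵐ v ∂μ, affineSlope v = 1) {x y : ℝ}
    (hx : ∀ᵐ v ∂μ, affineComp v x = x) (hy : ∀ᵐ v ∂μ, affineComp v y = y) : x = y := by
  by_contra hxy
  refine hμ ?_
  filter_upwards [hx, hy] with v hvx hvy
  have h := affineComp_sub v x y
  rw [hvx, hvy] at h
  have : (affineSlope v - 1) * (x - y) = 0 := by linear_combination -h
  exact sub_eq_zero.1 ((mul_eq_zero.1 this).resolve_right (sub_ne_zero.2 hxy))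

end AffineComp

section FinAppend

lemma measurableEmbedding_finAppend {α : Type*} [MeasurableSpace α] (m r : ℕ) :
    MeasurableEmbedding fun q : (Fin m → α) × (Fin r → α) => Fin.append q.1 q.2 := by
  refine MeasurableEmbedding.of_measurable_inverse (g := (Fin.appendEquiv m r).symm) ?_ ?_ ?_
    (Fin.appendEquiv m r).left_inv
  · refine measurable_pi_lambda _ fun i => ?_
    induction i using Fin.addCases with
    | left i => simpa using measurable_fst.eval
    | right i => simpa using measurable_snd.eval
  · rw [show (range fun q : (Fin m → α) × (Fin r → α) => Fin.append q.1 q.2) = univ from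
      (Fin.appendEquiv m r).surjective.range_eq]
    exact MeasurableSet.univ
  · exact (measurable_pi_lambda _ fun i => measurable_pi_apply _).prodMk
      (measurable_pi_lambda _ fun i => measurable_pi_apply _)

lemma measurePreserving_finAppend {α : Type*} [MeasurableSpace α] {m r : ℕ}
    (μ : Fin (m + r) → Measure α) [∀ i, SigmaFinite (μ i)] :
    MeasurePreserving (fun q : (Fin m → α) × (Fin r → α) => Fin.append q.1 q.2)
      ((Measure.pi fun i => μ (Fin.castAdd r i)).prod (Measure.pi fun i => μ (Fin.natAdd m i)))
      (Measure.pi μ) := by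
  refine ⟨(measurableEmbedding_finAppend m r).measurable, (Measure.pi_eq fun s hs => ?_).symm⟩
  have hpre : (fun q : (Fin m → α) × (Fin r → α) => Fin.append q.1 q.2) ⁻¹' univ.pi s =
      univ.pi (fun i => s (Fin.castAdd r i)) ×ˢ univ.pi (fun i => s (Fin.natAdd m i)) := by
    ext q
    simp [Fin.forall_fin_add]
  rw [(measurableEmbedding_finAppend m r).map_apply, hpre, Measure.prod_prod, Measure.pi_pi,
    Measure.pi_pi, Fin.prod_univ_add]

end FinAppend

lemma measure_eq_zero_of_disjoint_of_measure_eq_one {α : Type*} [MeasurableSpace α]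
    {μ : Measure α} [IsProbabilityMeasure μ] {s t : Set α} (hs : μ s = 1)
    (ht : MeasurableSet t) (hst : Disjoint s t) : μ t = 0 := by
  have h := measure_union (μ := μ) hst ht
  rw [hs] at h
  refine le_antisymm ((ENNReal.add_le_add_iff_left ENNReal.one_ne_top).1 ?_) zero_le
  rw [add_zero, ← h]
  exact prob_le_one

section Paths

variable {S : Type*}

def IsFirstReturn (i : S) (γ : ℕ → S) (n : ℕ) : Prop :=
  0 < n ∧ γ n = i ∧ ∀ k, 0 < k → k < n → γ k ≠ i

lemma isFirstReturn_congr {i : S} {γ γ' : ℕ → S} {n : ℕ} (h : ∀ k ≤ n, γ k = γ' k) :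
    IsFirstReturn i γ n ↔ IsFirstReturn i γ' n := by
  refine and_congr_right fun hn => and_congr (by rw [h n le_rfl]) ?_
  exact forall_congr' fun k => imp_congr_right fun _ => forall_congr' fun hk => by rw [h k hk.le]

lemma exists_isFirstReturn_le {i : S} {γ : ℕ → S} {n : ℕ} (hn : 0 < n) (hγ : γ n = i) :
    ∃ m ≤ n, IsFirstReturn i γ m := by
  classical
  have hex : ∃ m, 0 < m ∧ γ m = i := ⟨n, hn, hγ⟩
  exact ⟨Nat.find hex, Nat.find_min' hex ⟨hn, hγ⟩, (Nat.find_spec hex).1, (Nat.find_spec hex).2,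
    fun k hk hlt hki => Nat.find_min hex hlt ⟨hk, hki⟩⟩

def concatPath (α : ℕ → S) (m : ℕ) (β : ℕ → S) : ℕ → S :=
  fun k => if k < m then α k else β (k - m)

lemma concatPath_of_le {α β : ℕ → S} {m k : ℕ} (h : α m = β 0) (hk : k ≤ m) :
    concatPath α m β k = α k := by
  rcases hk.lt_or_eq with hk | rfl
  · simp [concatPath, hk]
  · simp [concatPath, h]

@[simp] lemma concatPath_add (α : ℕ → S) (m : ℕ) (β : ℕ → S) (k : ℕ) :
    concatPath α m β (m + k) = β k := by
  simp [concatPath]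

end Paths

namespace MMSetting

variable {S : Type*} [MeasurableSpace S] [MeasurableSingletonClass S] [Countable S]
  {Ω : Type*} [MeasurableSpace Ω] (X : MMSetting S Ω)

instance (i : S) : IsProbabilityMeasure (X.P i) := X.prob i

instance (a b : S) : IsProbabilityMeasure (X.K a b) := X.Kprob a b

def cylinder (γ : ℕ → S) (n : ℕ) : Set Ω := ⋂ k ∈ Finset.range (n + 1), {ω | X.M k ω = γ k}

def steps (n : ℕ) (ω : Ω) : Fin n → ℝ × ℝ := fun k => (X.A k ω, X.B k ω)

/-- The conditional law of `steps n` given the cylinder `X.cylinder γ n`. -/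
def pathMeasure (γ : ℕ → S) (n : ℕ) : Measure (Fin n → ℝ × ℝ) :=
  Measure.pi fun k => X.K (γ k) (γ (k + 1))

def IsPath (γ : ℕ → S) (n : ℕ) : Prop := ∀ k < n, X.p (γ k) (γ (k + 1)) ≠ 0

/-- Condition (E) of the paper. -/
def CondE (c : S → ℝ) : Prop := ∀ i, X.P i {ω | X.Ai i ω * c i + X.Bi i ω = c i} = 1

instance (γ : ℕ → S) (n : ℕ) : IsProbabilityMeasure (X.pathMeasure γ n) := by
  unfold pathMeasure; infer_instance

variable {X}

lemma mem_cylinder {γ : ℕ → S} {n : ℕ} {ω : Ω} :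
    ω ∈ X.cylinder γ n ↔ ∀ k ≤ n, X.M k ω = γ k := by
  simp [cylinder]

variable (X)

lemma measurableSet_cylinder (γ : ℕ → S) (n : ℕ) : MeasurableSet (X.cylinder γ n) :=
  .biInter (Finset.range (n + 1)).countable_toSet fun k _ =>
    X.measM k (measurableSet_singleton (γ k))

lemma measurable_steps (n : ℕ) : Measurable (X.steps n) :=
  measurable_pi_lambda _ fun k => (X.measA k).prodMk (X.measB k)

lemma affineComp_steps (n : ℕ) (ω : Ω) (x : ℝ) :
    affineComp (X.steps n ω) x = X.Pprod n ω * x + X.Ssum n ω := by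
  induction n generalizing x with
  | zero => simp [Pprod, Ssum]
  | succ n ih =>
    rw [affineComp_succ_last]
    change affineComp (X.steps n ω) (X.A n ω * x + X.B n ω) = _
    rw [ih]
    simp only [Pprod, Ssum, Finset.prod_range_succ, Finset.sum_range_succ]
    ring

lemma affineSlope_steps (n : ℕ) (ω : Ω) : affineSlope (X.steps n ω) = X.Pprod n ω :=
  Fin.prod_univ_eq_prod_range (fun k => X.A k ω) n

lemma ae_M_zero_eq (i : S) : ∀ᵐ ω ∂X.P i, X.M 0 ω = i :=
  (ae_iff_measure_eq (X.measM 0 (measurableSet_singleton i)).nullMeasurableSet).2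
    (by rw [measure_univ]; exact X.start i)

lemma measure_cylinder_ne_zero_iff {i : S} {γ : ℕ → S} (h0 : γ 0 = i) (n : ℕ) :
    X.P i (X.cylinder γ n) ≠ 0 ↔ X.IsPath γ n := by
  rw [cylinder, X.chain i n γ h0, Finset.prod_ne_zero_iff]
  simp [IsPath]

lemma map_steps_restrict_cylinder {i : S} {γ : ℕ → S} (h0 : γ 0 = i) (n : ℕ) :
    ((X.P i).restrict (X.cylinder γ n)).map (X.steps n) =
      X.P i (X.cylinder γ n) • X.pathMeasure γ n := by
  refine ext_of_generate_finite _ generateFrom_pi.symm isPiSystem_pi ?_ ?_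
  · rintro _ ⟨s, hs, rfl⟩
    have hs' : ∀ k, MeasurableSet (s k) := fun k => hs k (mem_univ k)
    set E : ℕ → Set (ℝ × ℝ) := fun k => if h : k < n then s ⟨k, h⟩ else univ
    have hE : ∀ k, MeasurableSet (E k) := fun k => by
      by_cases h : k < n <;> simp [E, h, hs']
    have hpre : X.steps n ⁻¹' univ.pi s =
        ⋂ k ∈ Finset.range n, {ω | (X.A k ω, X.B k ω) ∈ E k} := by
      ext ω
      simp only [steps, E, mem_preimage, mem_univ_pi, mem_iInter, Finset.mem_range, mem_ofPred_eq,
        Fin.forall_iff]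
      exact forall₂_congr fun k hk => by rw [dif_pos hk]
    rw [Measure.map_apply (X.measurable_steps n) (.univ_pi hs'),
      Measure.restrict_apply (X.measurable_steps n (.univ_pi hs')), hpre, inter_comm, cylinder,
      X.modulated i n γ E h0 hE, Measure.smul_apply, pathMeasure, Measure.pi_pi, smul_eq_mul,
      ← Fin.prod_univ_eq_prod_range (fun k => X.K (γ k) (γ (k + 1)) (E k))]
    simp [E]
  · simp [Measure.map_apply (X.measurable_steps n) .univ]

lemma measure_cylinder_inter_steps_preimage {i : S} {γ : ℕ → S} (h0 : γ 0 = i) (n : ℕ)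
    {E : Set (Fin n → ℝ × ℝ)} (hE : MeasurableSet E) :
    X.P i (X.cylinder γ n ∩ X.steps n ⁻¹' E) = X.P i (X.cylinder γ n) * X.pathMeasure γ n E := by
  have h := congrArg (fun μ => μ E) (X.map_steps_restrict_cylinder h0 n)
  simpa [Measure.map_apply (X.measurable_steps n) hE,
    Measure.restrict_apply (X.measurable_steps n hE), inter_comm] using h

lemma pathMeasure_eq_zero {i : S} {γ : ℕ → S} (h0 : γ 0 = i) {n : ℕ} (hγ : X.IsPath γ n)
    {E : Set (Fin n → ℝ × ℝ)} (hE : MeasurableSet E)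
    (h : X.P i (X.cylinder γ n ∩ X.steps n ⁻¹' E) = 0) : X.pathMeasure γ n E = 0 := by
  rw [X.measure_cylinder_inter_steps_preimage h0 n hE] at h
  exact (mul_eq_zero.1 h).resolve_left ((X.measure_cylinder_ne_zero_iff h0 n).2 hγ)

lemma ae_of_ae_pathMeasure {i : S} {γ : ℕ → S} (h0 : γ 0 = i) {n : ℕ}
    {Q : (Fin n → ℝ × ℝ) → Prop} (hQ : MeasurableSet {v | Q v})
    (h : ∀ᵐ v ∂X.pathMeasure γ n, Q v) :
    ∀ᵐ ω ∂X.P i, ω ∈ X.cylinder γ n → Q (X.steps n ω) := by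
  rw [ae_iff] at h ⊢
  have hset : {ω | ¬(ω ∈ X.cylinder γ n → Q (X.steps n ω))} =
      X.cylinder γ n ∩ X.steps n ⁻¹' {v | ¬ Q v} := by
    ext ω
    simp
  rw [hset, X.measure_cylinder_inter_steps_preimage h0 n (E := {v | ¬ Q v}) hQ.compl, h,
    mul_zero]

lemma ae_of_forall_cylinder {i : S} {n : ℕ} {Q : Ω → Prop}
    (h : ∀ γ : ℕ → S, γ 0 = i → X.IsPath γ n → ∀ᵐ ω ∂X.P i, ω ∈ X.cylinder γ n → Q ω) :
    ∀ᵐ ω ∂X.P i, Q ω := by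
  -- The cylinders of the countably many `f : Fin (n + 1) → S` cover `Ω`.
  have hall : ∀ᵐ ω ∂X.P i, ∀ f : Fin (n + 1) → S,
      ω ∈ X.cylinder (fun k => f (Fin.ofNat (n + 1) k)) n → Q ω := by
    refine ae_all_iff.2 fun f => ?_
    have hf0 : (fun k : ℕ => f (Fin.ofNat (n + 1) k)) 0 = f 0 := by simp
    by_cases h0 : f 0 = i
    · by_cases hγ : X.IsPath (fun k : ℕ => f (Fin.ofNat (n + 1) k)) n
      · exact h _ (hf0.trans h0) hγ
      · have hnull := not_not.1 (mt (X.measure_cylinder_ne_zero_iff (hf0.trans h0) n).1 hγ)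
        filter_upwards [measure_eq_zero_iff_ae_notMem.1 hnull] with ω hω hmem
        exact absurd hmem hω
    · filter_upwards [X.ae_M_zero_eq i] with ω hω hmem
      exact absurd (hω.symm.trans ((mem_cylinder.1 hmem 0 (Nat.zero_le n)).trans hf0)) (Ne.symm h0)
  filter_upwards [hall] with ω hω
  refine hω (fun k => X.M k ω) (mem_cylinder.2 fun k hk => ?_)
  rw [Fin.val_ofNat, Nat.mod_eq_of_lt (Nat.lt_succ_of_le hk)]

lemma exists_isPath (i j : S) : ∃ n γ, γ 0 = i ∧ γ n = j ∧ X.IsPath γ n := by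
  obtain ⟨n, hn⟩ := X.irreducible i j
  by_contra! hno
  refine hn.ne' (measure_eq_zero_iff_ae_notMem.2 ?_)
  refine X.ae_of_forall_cylinder (n := n) fun γ h0 hγ => ?_
  exact .of_forall fun ω hω hMn => hno n γ h0 ((mem_cylinder.1 hω n le_rfl).symm.trans hMn) hγ

lemma tau_one_eq_iff {i : S} {n : ℕ} {ω : Ω} (hn : 0 < n) :
    X.tau i 1 ω = n ↔ IsFirstReturn i (X.M · ω) n := by
  change sInf {k | 0 < k ∧ X.M k ω = i} = n ↔ _
  constructor
  · rintro rfl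
    obtain ⟨h1, h2⟩ := Nat.sInf_mem (Nat.nonempty_of_pos_sInf hn)
    exact ⟨h1, h2, fun k hk hlt hki => Nat.notMem_of_lt_sInf hlt ⟨hk, hki⟩⟩
  · rintro ⟨hn, hni, hfirst⟩
    exact IsLeast.csInf_eq ⟨⟨hn, hni⟩, fun k ⟨hk, hki⟩ => not_lt.1 fun hlt => hfirst k hk hlt hki⟩

lemma ae_affineComp_eq_of_isFirstReturn {i : S} {x : ℝ}
    (hx : X.P i {ω | X.Ai i ω * x + X.Bi i ω = x} = 1) {γ : ℕ → S} {n : ℕ} (h0 : γ 0 = i)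
    (hγ : IsFirstReturn i γ n) (hpath : X.IsPath γ n) :
    ∀ᵐ v ∂X.pathMeasure γ n, affineComp v x = x := by
  have hQ : MeasurableSet {v : Fin n → ℝ × ℝ | ¬ affineComp v x = x} :=
    (measurable_affineComp x (measurableSet_singleton x)).compl
  refine ae_iff.2 (X.pathMeasure_eq_zero h0 hpath hQ ?_)
  -- The event in (E) is not known to be measurable: we only use that it misses a measurable one.
  refine measure_eq_zero_of_disjoint_of_measure_eq_one hx
    ((X.measurableSet_cylinder γ n).inter (X.measurable_steps n hQ)) ?_
  refine disjoint_left.2 fun ω hω ⟨hcyl, hne⟩ => hne ?_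
  have htau : X.tau i 1 ω = n :=
    (X.tau_one_eq_iff hγ.1).2 ((isFirstReturn_congr (mem_cylinder.1 hcyl)).2 hγ)
  simpa [Ai, Bi, htau, affineComp_steps] using hω

lemma measurePreserving_pathMeasure_append (γ : ℕ → S) (m r : ℕ) :
    MeasurePreserving (fun q => Fin.append q.1 q.2)
      ((X.pathMeasure γ m).prod (X.pathMeasure (fun k => γ (m + k)) r))
      (X.pathMeasure γ (m + r)) :=
  measurePreserving_finAppend fun k => X.K (γ k) (γ (k + 1))

lemma ae_pathMeasure_add {γ : ℕ → S} {m r : ℕ} {Q₁ : (Fin m → ℝ × ℝ) → Prop}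
    {Q₂ : (Fin r → ℝ × ℝ) → Prop} {Q : (Fin (m + r) → ℝ × ℝ) → Prop}
    (h₁ : ∀ᵐ v ∂X.pathMeasure γ m, Q₁ v) (h₂ : ∀ᵐ w ∂X.pathMeasure (fun k => γ (m + k)) r, Q₂ w)
    (h : ∀ v w, Q₁ v → Q₂ w → Q (Fin.append v w)) :
    ∀ᵐ u ∂X.pathMeasure γ (m + r), Q u := by
  rw [← (X.measurePreserving_pathMeasure_append γ m r).map_eq,
    (measurableEmbedding_finAppend m r).ae_map_iff]
  filter_upwards [Measure.quasiMeasurePreserving_fst.ae h₁,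
    Measure.quasiMeasurePreserving_snd.ae h₂] with q hq₁ hq₂
  exact h q.1 q.2 hq₁ hq₂

lemma ae_ae_of_ae_pathMeasure_add {γ : ℕ → S} {m r : ℕ} {Q : (Fin (m + r) → ℝ × ℝ) → Prop}
    (h : ∀ᵐ u ∂X.pathMeasure γ (m + r), Q u) :
    ∀ᵐ v ∂X.pathMeasure γ m, ∀ᵐ w ∂X.pathMeasure (fun k => γ (m + k)) r, Q (Fin.append v w) :=
  Measure.ae_ae_of_ae_prod
    ((X.measurePreserving_pathMeasure_append γ m r).quasiMeasurePreserving.ae h)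

lemma pathMeasure_concatPath {α β : ℕ → S} {m : ℕ} (h : α m = β 0) :
    X.pathMeasure (concatPath α m β) m = X.pathMeasure α m := by
  simp only [pathMeasure]
  congr 1
  ext1 k
  rw [concatPath_of_le h k.isLt.le, concatPath_of_le h k.isLt]

lemma IsPath.concatPath {α β : ℕ → S} {m r : ℕ} (h : α m = β 0) (hα : X.IsPath α m)
    (hβ : X.IsPath β r) : X.IsPath (Perpetuities.concatPath α m β) (m + r) := by
  intro k hk
  rcases lt_or_ge k m with hkm | hkm
  · rw [concatPath_of_le h hkm.le, concatPath_of_le h hkm]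
    exact hα k hkm
  · obtain ⟨l, rfl⟩ := Nat.exists_eq_add_of_le hkm
    rw [add_assoc, concatPath_add, concatPath_add]
    exact hβ l (by omega)

lemma ae_ae_of_ae_pathMeasure_concatPath {α β : ℕ → S} {m r : ℕ} (hαβ : α m = β 0)
    {Q : (Fin (m + r) → ℝ × ℝ) → Prop} (h : ∀ᵐ u ∂X.pathMeasure (concatPath α m β) (m + r), Q u) :
    ∀ᵐ v ∂X.pathMeasure α m, ∀ᵐ w ∂X.pathMeasure β r, Q (Fin.append v w) := by
  have h' := X.ae_ae_of_ae_pathMeasure_add h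
  rwa [X.pathMeasure_concatPath hαβ, funext (concatPath_add α m β)] at h'

lemma ae_affineComp_eq_of_cycle {i : S} {x : ℝ}
    (hx : X.P i {ω | X.Ai i ω * x + X.Bi i ω = x} = 1) (n : ℕ) :
    ∀ γ : ℕ → S, γ 0 = i → γ n = i → X.IsPath γ n →
      ∀ᵐ v ∂X.pathMeasure γ n, affineComp v x = x := by
  induction n using Nat.strong_induction_on with
  | _ n ih =>
  intro γ h0 hn hpath
  rcases n.eq_zero_or_pos with rfl | hpos
  · exact .of_forall fun v => affineComp_zero v x
  obtain ⟨m, hmn, hm⟩ := exists_isFirstReturn_le hpos hn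
  obtain ⟨r, rfl⟩ := Nat.exists_eq_add_of_le hmn
  have hfirst := X.ae_affineComp_eq_of_isFirstReturn hx h0 hm fun k hk => hpath k (by omega)
  have hrest := ih r (by have := hm.1; omega) (fun k => γ (m + k)) (by simpa using hm.2.1) hn
    fun k hk => hpath (m + k) (by omega)
  exact X.ae_pathMeasure_add hfirst hrest fun v w hv hw => by rw [affineComp_append, hw, hv]

lemma exists_isFirstReturn_not_ae_affineSlope_eq_one {i : S}
    (hi : X.P i {ω | X.Ai i ω = 1} < 1) :
    ∃ n γ, γ 0 = i ∧ IsFirstReturn i γ n ∧ X.IsPath γ n ∧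
      ¬ ∀ᵐ v ∂X.pathMeasure γ n, affineSlope v = 1 := by
  by_contra! h
  have hA : ∀ᵐ ω ∂X.P i, ∀ n, X.tau i 1 ω = n → X.Ai i ω = 1 := by
    refine ae_all_iff.2 fun n => ?_
    rcases n.eq_zero_or_pos with rfl | hn
    · exact .of_forall fun ω htau => by simp [Ai, htau, Pprod]
    refine X.ae_of_forall_cylinder (n := n) fun γ h0 hγ => ?_
    by_cases hfr : IsFirstReturn i γ n
    · filter_upwards [X.ae_of_ae_pathMeasure h0
        (measurable_affineSlope (measurableSet_singleton 1)) (h n γ h0 hfr hγ)] with ω hω hcyl htau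
      rw [Ai, htau, ← affineSlope_steps]
      exact hω hcyl
    · exact .of_forall fun ω hcyl htau => absurd
        ((isFirstReturn_congr (mem_cylinder.1 hcyl)).1 ((X.tau_one_eq_iff hn).1 htau)) hfr
  refine hi.ne ((measure_congr (ae_eq_univ.2 ?_)).trans measure_univ)
  exact ae_iff.1 (hA.mono fun ω h => h _ rfl)

/-- With `δ` a nondegenerate cycle at some state and `α`, `β` paths from `j` to it and back:
if the cycles `α β` and `α δ β` at `j` were both degenerate, so would be `δ`. -/
lemma exists_cycle_not_ae_affineSlope_eq_one (hlt : ∃ i, X.P i {ω | X.Ai i ω = 1} < 1) (j : S) :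
    ∃ n γ, γ 0 = j ∧ γ n = j ∧ X.IsPath γ n ∧ ¬ ∀ᵐ v ∂X.pathMeasure γ n, affineSlope v = 1 := by
  obtain ⟨i, hi⟩ := hlt
  obtain ⟨d, δ, hδ0, hδ, hδpath, hδslope⟩ := X.exists_isFirstReturn_not_ae_affineSlope_eq_one hi
  obtain ⟨a, α, hα0, hαa, hαpath⟩ := X.exists_isPath j i
  obtain ⟨b, β, hβ0, hβb, hβpath⟩ := X.exists_isPath i j
  have hαβ : α a = β 0 := hαa.trans hβ0.symm
  have hδβ : δ d = β 0 := hδ.2.1.trans hβ0.symm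
  have hαδβ : α a = concatPath δ d β 0 := by rw [concatPath_of_le hδβ (Nat.zero_le d), hδ0, hαa]
  by_contra! hdeg
  have h₁ := X.ae_ae_of_ae_pathMeasure_concatPath hαβ <|
    hdeg _ _ (by rw [concatPath_of_le hαβ (Nat.zero_le a), hα0]) (by rw [concatPath_add, hβb])
      (hαpath.concatPath X hαβ hβpath)
  have h₂ := X.ae_ae_of_ae_pathMeasure_concatPath hαδβ <|
    hdeg (a + (d + b)) _ (by rw [concatPath_of_le hαδβ (Nat.zero_le a), hα0])
      (by rw [concatPath_add, concatPath_add, hβb])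
      (hαpath.concatPath X hαδβ (hδpath.concatPath X hδβ hβpath))
  obtain ⟨v, hv₁, hv₂⟩ := (h₁.and h₂).exists
  refine hδslope ?_
  filter_upwards [X.ae_ae_of_ae_pathMeasure_concatPath hδβ hv₂] with e he
  obtain ⟨w, hw₁, hw₂⟩ := (hv₁.and he).exists
  simp only [affineSlope_append] at hw₁ hw₂
  linear_combination hw₂ - affineSlope e * hw₁

/-- For `v` along `γ`, split the cycles `γ β` and `γ δ β` at `a`, where `β` returns from `b` to `a`
and `δ` is a nondegenerate cycle at `b`. Either `affineComp v` is constant, or `affineComp w (c a)`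
is a.s. a constant `y` for `w` along `β`, and `y` is fixed by a.e. `affineComp e` along `δ`, so
`y = c b`. -/
lemma ae_affineComp_eq_of_isPath {c : S → ℝ} (hc : X.CondE c)
    (hlt : ∃ i, X.P i {ω | X.Ai i ω = 1} < 1) {a b : S} {γ : ℕ → S} {n : ℕ} (h0 : γ 0 = a)
    (hn : γ n = b) (hγ : X.IsPath γ n) :
    ∀ᵐ v ∂X.pathMeasure γ n, affineComp v (c b) = c a := by
  obtain ⟨m, β, hβ0, hβm, hβ⟩ := X.exists_isPath b a
  obtain ⟨d, δ, hδ0, hδd, hδ, hδslope⟩ := X.exists_cycle_not_ae_affineSlope_eq_one hlt b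
  have hγβ : γ n = β 0 := hn.trans hβ0.symm
  have hδβ : δ d = β 0 := hδd.trans hβ0.symm
  have hγδβ : γ n = concatPath δ d β 0 := by rw [concatPath_of_le hδβ (Nat.zero_le d), hδ0, hn]
  have h₁ := X.ae_ae_of_ae_pathMeasure_concatPath hγβ <|
    X.ae_affineComp_eq_of_cycle (hc a) _ _ (by rw [concatPath_of_le hγβ (Nat.zero_le n), h0])
      (by rw [concatPath_add, hβm]) (hγ.concatPath X hγβ hβ)
  have h₂ := X.ae_ae_of_ae_pathMeasure_concatPath hγδβ <|
    X.ae_affineComp_eq_of_cycle (hc a) (n + (d + m)) _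
      (by rw [concatPath_of_le hγδβ (Nat.zero_le n), h0])
      (by rw [concatPath_add, concatPath_add, hβm])
      (hγ.concatPath X hγδβ (hδ.concatPath X hδβ hβ))
  have hfix := X.ae_affineComp_eq_of_cycle (hc b) d δ hδ0 hδd hδ
  filter_upwards [h₁, h₂] with v hv₁ hv₂
  simp only [affineComp_append] at hv₁ hv₂
  obtain ⟨w₀, hw₀⟩ := hv₁.exists
  set y := affineComp w₀ (c a)
  have hsub := affineComp_sub v (c b) y
  by_cases hv : affineSlope v = 0
  · rw [hv, zero_mul, hw₀, sub_eq_zero] at hsub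
    exact hsub
  have hinj : ∀ x, affineComp v x = c a → x = y := fun x hx => by
    have h := affineComp_sub v x y
    rw [hx, hw₀, sub_self] at h
    exact sub_eq_zero.1 ((mul_eq_zero.1 h.symm).resolve_left hv)
  have hy : ∀ᵐ e ∂X.pathMeasure δ d, affineComp e y = y := by
    filter_upwards [X.ae_ae_of_ae_pathMeasure_concatPath hδβ hv₂] with e he
    obtain ⟨w, hw₁, hw₂⟩ := (hv₁.and he).exists
    rw [affineComp_append] at hw₂
    have h := hinj _ hw₂
    rwa [hinj _ hw₁] at h
  rw [eq_of_ae_affineComp_eq hδslope hfix hy]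
  exact hw₀

lemma ae_K_mul_add_eq {c : S → ℝ} (hc : X.CondE c)
    (hlt : ∃ i, X.P i {ω | X.Ai i ω = 1} < 1) {a b : S} (hab : X.p a b ≠ 0) :
    ∀ᵐ z ∂X.K a b, z.1 * c b + z.2 = c a := by
  let γ : ℕ → S := fun k => if k = 0 then a else b
  have h := X.ae_affineComp_eq_of_isPath hc hlt (γ := γ) (n := 1) rfl rfl fun k hk => by
    obtain rfl : k = 0 := by omega
    exact hab
  have hmp : MeasurePreserving (Function.eval 0) (X.pathMeasure γ 1) (X.K a b) :=
    measurePreserving_eval _ 0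
  have hQ : MeasurableSet {z : ℝ × ℝ | z.1 * c b + z.2 = c a} :=
    ((measurable_fst.mul_const _).add measurable_snd) (measurableSet_singleton _)
  rw [← hmp.map_eq, ae_map_iff hmp.measurable.aemeasurable hQ]
  filter_upwards [h] with v hv
  rwa [affineComp_one] at hv

lemma ae_A_mul_add_B_eq {c : S → ℝ} (hc : X.CondE c)
    (hlt : ∃ i, X.P i {ω | X.Ai i ω = 1} < 1) (i : S) (k : ℕ) :
    ∀ᵐ ω ∂X.P i, X.A k ω * c (X.M (k + 1) ω) + X.B k ω = c (X.M k ω) := by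
  refine X.ae_of_forall_cylinder (n := k + 1) fun γ h0 hγ => ?_
  have hedge := (measurePreserving_eval (fun l : Fin (k + 1) => X.K (γ l) (γ (l + 1)))
    (Fin.last k)).quasiMeasurePreserving.ae (X.ae_K_mul_add_eq hc hlt (hγ k k.lt_succ_self))
  have hQ : MeasurableSet {v : Fin (k + 1) → ℝ × ℝ |
      (v (Fin.last k)).1 * c (γ (k + 1)) + (v (Fin.last k)).2 = c (γ k)} :=
    ((((measurable_pi_apply _).fst.mul_const _).add (measurable_pi_apply _).snd))
      (measurableSet_singleton _)
  filter_upwards [X.ae_of_ae_pathMeasure h0 hQ hedge] with ω hω hcyl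
  rw [mem_cylinder.1 hcyl k k.le_succ, mem_cylinder.1 hcyl (k + 1) le_rfl]
  exact hω hcyl

lemma ae_Pprod_mul_add_Ssum_eq {c : S → ℝ} (hc : X.CondE c)
    (hlt : ∃ i, X.P i {ω | X.Ai i ω = 1} < 1) (i : S) (n : ℕ) :
    ∀ᵐ ω ∂X.P i, X.Pprod n ω * c (X.M n ω) + X.Ssum n ω = c (X.M 0 ω) := by
  filter_upwards [ae_all_iff.2 (X.ae_A_mul_add_B_eq hc hlt i)] with ω hω
  induction n with
  | zero => simp [Pprod, Ssum]
  | succ n ih =>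
    rw [← ih]
    simp only [Pprod, Ssum, Finset.prod_range_succ, Finset.sum_range_succ]
    linear_combination (∏ k ∈ Finset.range n, X.A k ω) * hω n

lemma ae_Pπ_of_forall {Q : Ω → Prop} (h : ∀ i, ∀ᵐ ω ∂X.P i, Q ω) : ∀ᵐ ω ∂X.Pπ, Q ω := by
  rw [Pπ, Measure.ae_sum_eq, eventually_iSup]
  exact fun i => Measure.ae_smul_measure (h i) _

lemma CondE.unique {c c' : S → ℝ} (hc : X.CondE c) (hc' : X.CondE c')
    (hlt : ∃ i, X.P i {ω | X.Ai i ω = 1} < 1) : c = c' := by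
  funext j
  obtain ⟨n, γ, h0, hn, hγ, hslope⟩ := X.exists_cycle_not_ae_affineSlope_eq_one hlt j
  exact eq_of_ae_affineComp_eq hslope (X.ae_affineComp_eq_of_cycle (hc j) n γ h0 hn hγ)
    (X.ae_affineComp_eq_of_cycle (hc' j) n γ h0 hn hγ)

end MMSetting

open MMSetting

theorem degeneracy_consequences_general
    {S : Type*} [MeasurableSpace S] [MeasurableSingletonClass S] [Countable S]
    {Ω : Type*} [MeasurableSpace Ω] (X : MMSetting S Ω)
    (c : S → ℝ) (hE : ∀ i : S, X.P i {ω | X.Ai i ω * c i + X.Bi i ω = c i} = 1)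
    (hlt : ∃ i : S, X.P i {ω | X.Ai i ω = 1} < 1) :
    (∀ c' : S → ℝ, (∀ i : S, X.P i {ω | X.Ai i ω * c' i + X.Bi i ω = c' i} = 1) → c' = c) ∧
      X.DegenD c ∧
      ∀ n : ℕ, 1 ≤ n →
        ∀ᵐ ω ∂ X.Pπ, X.Pprod n ω * c (X.M n ω) + X.Ssum n ω = c (X.M 0 ω) :=
  ⟨fun _ hE' => (CondE.unique X hE hE' hlt).symm,
    X.ae_Pπ_of_forall fun i => X.ae_A_mul_add_B_eq hE hlt i 0,
    fun n _ => X.ae_Pπ_of_forall fun i => X.ae_Pprod_mul_add_Ssum_eq hE hlt i n⟩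

/-- **Proposition 4.5** (consequences of degeneracy, non-lattice case). In the
Markov-modulated setting with `|S| > 1`: suppose condition (E) holds, i.e. there is a
family `(c_i)_{i ∈ S}` with `P_i(A_1^i c_i + B_1^i = c_i) = 1` for all `i`, and suppose
`P_i(A_1^i = 1) < 1` for some (equivalently, all) `i ∈ S`. Then the family `(c_i)` in (E)
is unique, the degeneracy condition (D) `P_π(A_1 c_{M_1} + B_1 = c_{M_0}) = 1` holds, and
more generally `Π_n c_{M_n} + ∑_{k=1}^n Π_{k-1} B_k = c_{M_0}` a.s. for every `n ≥ 1`. -/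
theorem degeneracy_consequences
    {S : Type*} [MeasurableSpace S] [MeasurableSingletonClass S] [Countable S] [Nontrivial S]
    {Ω : Type*} [MeasurableSpace Ω] (X : MMSetting S Ω)
    (c : S → ℝ) (hE : ∀ i : S, X.P i {ω | X.Ai i ω * c i + X.Bi i ω = c i} = 1)
    (hlt : ∃ i : S, X.P i {ω | X.Ai i ω = 1} < 1) :
    (∀ c' : S → ℝ, (∀ i : S, X.P i {ω | X.Ai i ω * c' i + X.Bi i ω = c' i} = 1) → c' = c) ∧
      X.DegenD c ∧
      ∀ n : ℕ, 1 ≤ n →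
        ∀ᵐ ω ∂ X.Pπ, X.Pprod n ω * c (X.M n ω) + X.Ssum n ω = c (X.M 0 ω) :=
  degeneracy_consequences_general X c hE hlt

end Perpetuities
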